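/- For every natural number x ≥ 2, the number of primes p with x ≤ p ≤ x² is at least x; that is, π(x²) − π(x − 1) ≥ x. -/

import Mathlib

/-!
Chebyshev's elementary bound: `2 ^ n ≤ ∑ₖ (n choose k) ≤ (n + 1) * lcm(1, …, n) ≤ (n + 1) * n ^ π(n)`,
so `n ≤ c * (π n + 1)` as soon as `n + 1 ≤ 2 ^ c`. For `n = x²` and `2 ^ (k - 1) ≤ x < 2 ^ k` this gives
`π(x²) ≥ x² / 2k - 1 ≥ (3x + 1) / 2` once `x ≥ 16`, while counting odd numbers gives `π(x - 1) ≤ (x + 1) / 2`.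
The cases `x < 16` are checked directly.
-/

open scoped Nat.Prime

namespace Nat

theorem lcmUpto_le_pow_primeCounting (n : ℕ) : lcmUpto n ≤ n ^ π n := by
  rw [lcmUpto_eq_prod_pow_log, ← primesLE_card_eq_primeCounting]
  exact Finset.prod_le_pow_card _ _ _ fun p hp ↦
    pow_log_le_self p ((prime_of_mem_primesLE hp).pos.trans_le (le_of_mem_primesLE hp)).ne'

theorem le_mul_primeCounting_add_one {n c : ℕ} (h : n + 1 ≤ 2 ^ c) : n ≤ c * (π n + 1) := by
  refine (Nat.pow_le_pow_iff_right one_lt_two).mp ?_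
  calc 2 ^ n ≤ (n + 1) * lcmUpto n := Chebyshev.two_pow_le_mul_lcmUpto n
    _ ≤ 2 ^ c * (2 ^ c) ^ π n := by
      gcongr
      exact (lcmUpto_le_pow_primeCounting n).trans (Nat.pow_le_pow_left (by omega) _)
    _ = 2 ^ (c * (π n + 1)) := by ring

theorem two_mul_primeCounting_le_add_two (n : ℕ) : 2 * π n ≤ n + 2 := by
  rcases lt_or_ge n 2 with hn | hn
  · interval_cases n <;> simp
  obtain ⟨m, rfl⟩ := exists_add_of_le hn
  have := primeCounting_add_le (a := 2) (k := 2) two_ne_zero le_rfl m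
  rw [totient_two, show π 2 = 1 by decide] at this
  omega

theorem three_mul_succ_lt_two_pow {L : ℕ} (hL : 4 ≤ L) : 3 * (L + 1) < 2 ^ L := by
  induction L, hL using Nat.le_induction with
  | base => norm_num
  | succ L _ ih => rw [pow_succ]; omega

theorem exists_succ_le_two_pow_three_mul_lt {x : ℕ} (hx : 16 ≤ x) :
    ∃ k, x + 1 ≤ 2 ^ k ∧ 3 * k < x :=
  ⟨log 2 x + 1, lt_pow_succ_log_self one_lt_two x,
    (three_mul_succ_lt_two_pow (le_log_of_pow_le one_lt_two hx)).trans_le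
      (pow_log_le_self 2 (by omega))⟩

theorem three_mul_add_one_le_two_mul_primeCounting_sq {x : ℕ} (hx : 16 ≤ x) :
    3 * x + 1 ≤ 2 * π (x ^ 2) := by
  obtain ⟨k, hxk, hkx⟩ := exists_succ_le_two_pow_three_mul_lt hx
  have hsq : x ^ 2 + 1 ≤ 2 ^ (2 * k) := by
    rw [pow_mul']
    nlinarith
  have := le_mul_primeCounting_add_one hsq
  nlinarith

end Nat

/-- For every natural number `x ≥ 2`, the number of primes `p` with `x ≤ p ≤ x²`,
i.e. `π(x²) − π(x − 1)`, is at least `x`. -/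
theorem primes_in_closed_range_ge_self
    (x : ℕ) (hx : 2 ≤ x) :
    x ≤ Nat.primeCounting (x ^ 2) - Nat.primeCounting (x - 1) := by
  rcases lt_or_ge x 16 with hsmall | hlarge
  · set_option maxRecDepth 10000 in
    interval_cases x <;> decide
  have hlow := Nat.two_mul_primeCounting_le_add_two (x - 1)
  have hhigh := Nat.three_mul_add_one_le_two_mul_primeCounting_sq hlarge
  omega
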